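/- Let U, V be lo-subsets of a lo-set W with U ∪ V = W and U ∩ V = Z. Then the gluing composition (S=U, carrier U, T=Z) * (S=Z, carrier V, T=V) is subsumed by the discrete ipomset (S=U, carrier W, T=V). -/

import Mathlib

/-- A labelled iposet with event order: a carrier `α` with a strict precedence
order `lt` and a strict event order `elt` such that any two distinct elements
are comparable by one of them, a labelling, and interfaces `S`, `T` consisting
of minimal resp. maximal elements. -/
structure LIPE (Λ α : Type) where
  lt : α → α → Prop
  lt_irrefl : ∀ x, ¬ lt x x
  lt_trans : ∀ x y z, lt x y → lt y z → lt x z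
  elt : α → α → Prop
  elt_irrefl : ∀ x, ¬ elt x x
  elt_trans : ∀ x y z, elt x y → elt y z → elt x z
  compat : ∀ x y, x ≠ y → lt x y ∨ lt y x ∨ elt x y ∨ elt y x
  lab : α → Λ
  S : Set α
  T : Set α
  S_min : ∀ s ∈ S, ∀ x, ¬ lt x s
  T_max : ∀ t ∈ T, ∀ x, ¬ lt t x

/-- `R` together with `i`, `j` is the gluing composition of `P` and `Q`:
carriers are identified exactly along `T_P = S_Q` (label-preservingly),
`R.lt` is generated by the orders of `P` and `Q` together with `x < y` for
`x ∈ P \ T_P`, `y ∈ Q \ S_Q`, the event order is the transitive closure of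
the union of the event orders, `S_R = S_P`, `T_R = T_Q`. -/
def IsGluing {Λ α β γ : Type} (P : LIPE Λ α) (Q : LIPE Λ β) (R : LIPE Λ γ)
    (i : α → γ) (j : β → γ) : Prop :=
  Function.Injective i ∧ Function.Injective j ∧
  (∀ c : γ, (∃ a, i a = c) ∨ (∃ b, j b = c)) ∧
  (∀ a b, i a = j b → a ∈ P.T ∧ b ∈ Q.S) ∧
  (∀ a ∈ P.T, ∃ b ∈ Q.S, i a = j b) ∧
  (∀ b ∈ Q.S, ∃ a ∈ P.T, i a = j b) ∧
  (∀ a b, i a = j b → P.lab a = Q.lab b) ∧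
  (∀ x y, R.lt x y ↔
    ((∃ a a', x = i a ∧ y = i a' ∧ P.lt a a') ∨
     (∃ b b', x = j b ∧ y = j b' ∧ Q.lt b b') ∨
     (∃ a b, x = i a ∧ y = j b ∧ a ∉ P.T ∧ b ∉ Q.S))) ∧
  (∀ x y, R.elt x y ↔ Relation.TransGen (fun u v =>
    (∃ a a', u = i a ∧ v = i a' ∧ P.elt a a') ∨
    (∃ b b', u = j b ∧ v = j b' ∧ Q.elt b b')) x y) ∧
  R.S = i '' P.S ∧ R.T = j '' Q.T ∧
  (∀ a, R.lab (i a) = P.lab a) ∧ (∀ b, R.lab (j b) = Q.lab b)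

/-- The discrete ipomset on a lo-set (totally event-ordered labelled set)
with interfaces `S`, `T`: the precedence order is empty. -/
def discrete {Λ α : Type} (eo : α → α → Prop) (h1 : ∀ x, ¬ eo x x)
    (h2 : ∀ x y z, eo x y → eo y z → eo x z)
    (h3 : ∀ x y, x ≠ y → eo x y ∨ eo y x)
    (lab : α → Λ) (S T : Set α) : LIPE Λ α where
  lt _ _ := False
  lt_irrefl _ := id
  lt_trans _ _ _ h _ := h.elim
  elt := eo
  elt_irrefl := h1
  elt_trans := h2
  compat x y h := Or.inr (Or.inr (h3 x y h))
  lab := lab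
  S := S
  T := T
  S_min _ _ _ := id
  T_max _ _ _ := id

/-- A subsumption `f : P → Q`: a bijection preserving interfaces and labels
and reflecting the precedence order. -/
def IsSubsumption {Λ α β : Type} (P : LIPE Λ α) (Q : LIPE Λ β) (f : α → β) : Prop :=
  Function.Bijective f ∧ f '' P.S = Q.S ∧ f '' P.T = Q.T ∧
  (∀ a, Q.lab (f a) = P.lab a) ∧
  (∀ x y, Q.lt (f x) (f y) → P.lt x y)

namespace IsGluing

variable {Λ α β γ : Type} {P : LIPE Λ α} {Q : LIPE Λ β} {R : LIPE Λ γ}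
  {i : α → γ} {j : β → γ}

theorem S_eq (hR : IsGluing P Q R i j) : R.S = i '' P.S :=
  hR.2.2.2.2.2.2.2.2.2.1

theorem T_eq (hR : IsGluing P Q R i j) : R.T = j '' Q.T :=
  hR.2.2.2.2.2.2.2.2.2.2.1

theorem lab_eq_of_comp (hR : IsGluing P Q R i j) {l : γ → Λ} (hP : P.lab = l ∘ i)
    (hQ : Q.lab = l ∘ j) : R.lab = l := by
  obtain ⟨-, -, hcover, -, -, -, -, -, -, -, -, hlab_i, hlab_j⟩ := hR
  funext c
  rcases hcover c with ⟨a, rfl⟩ | ⟨b, rfl⟩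
  · exact (hlab_i a).trans (congrFun hP a)
  · exact (hlab_j b).trans (congrFun hQ b)

end IsGluing

theorem isSubsumption_id_discrete {Λ α : Type} (R : LIPE Λ α) (eo : α → α → Prop)
    (h1 : ∀ x, ¬ eo x x) (h2 : ∀ x y z, eo x y → eo y z → eo x z)
    (h3 : ∀ x y, x ≠ y → eo x y ∨ eo y x) {S T : Set α} {lab : α → Λ}
    (hS : R.S = S) (hT : R.T = T) (hlab : R.lab = lab) :
    IsSubsumption R (discrete eo h1 h2 h3 lab S T) id := by
  subst hS hT hlab
  exact ⟨Function.bijective_id, Set.image_id _, Set.image_id _, fun _ => rfl,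
    fun _ _ h => h.elim⟩

theorem glue_subsumed_by_discrete_general {Λ γ : Type} (eo : γ → γ → Prop)
    (h1 : ∀ x, ¬ eo x x) (h2 : ∀ x y z, eo x y → eo y z → eo x z)
    (h3 : ∀ x y, x ≠ y → eo x y ∨ eo y x) (lab : γ → Λ)
    (U V : Set γ)
    (G : LIPE Λ γ)
    (hG : IsGluing
      (discrete (Λ := Λ) (fun x y : U => eo x.val y.val)
        (fun x => h1 x.val) (fun x y z => h2 x.val y.val z.val)
        (fun x y h => h3 x.val y.val (fun he => h (Subtype.ext he)))
        (fun x => lab x.val) Set.univ {x : U | x.val ∈ V})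
      (discrete (Λ := Λ) (fun x y : V => eo x.val y.val)
        (fun x => h1 x.val) (fun x y z => h2 x.val y.val z.val)
        (fun x y h => h3 x.val y.val (fun he => h (Subtype.ext he)))
        (fun x => lab x.val) {x : V | x.val ∈ U} Set.univ)
      G Subtype.val Subtype.val) :
    ∃ f : γ → γ, IsSubsumption G (discrete eo h1 h2 h3 lab U V) f :=
  ⟨id, isSubsumption_id_discrete G eo h1 h2 h3
    (hG.S_eq.trans (Subtype.coe_image_univ U)) (hG.T_eq.trans (Subtype.coe_image_univ V))
    (hG.lab_eq_of_comp rfl rfl)⟩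

/-- Let `U`, `V` be lo-subsets of a lo-set `W` (carrier `γ`) with
`U ∪ V = W` and `Z = U ∩ V`.  Any gluing composition `G` of the discrete
ipomsets `(U, U, Z)` and `(Z, V, V)` is subsumed by the discrete ipomset
`(U, W, V)`. -/
theorem glue_subsumed_by_discrete {Λ γ : Type} (eo : γ → γ → Prop)
    (h1 : ∀ x, ¬ eo x x) (h2 : ∀ x y z, eo x y → eo y z → eo x z)
    (h3 : ∀ x y, x ≠ y → eo x y ∨ eo y x) (lab : γ → Λ)
    (U V : Set γ) (hUV : U ∪ V = Set.univ)
    (G : LIPE Λ γ)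
    (hG : IsGluing
      (discrete (Λ := Λ) (fun x y : U => eo x.val y.val)
        (fun x => h1 x.val) (fun x y z => h2 x.val y.val z.val)
        (fun x y h => h3 x.val y.val (fun he => h (Subtype.ext he)))
        (fun x => lab x.val) Set.univ {x : U | x.val ∈ V})
      (discrete (Λ := Λ) (fun x y : V => eo x.val y.val)
        (fun x => h1 x.val) (fun x y z => h2 x.val y.val z.val)
        (fun x y h => h3 x.val y.val (fun he => h (Subtype.ext he)))
        (fun x => lab x.val) {x : V | x.val ∈ U} Set.univ)
      G Subtype.val Subtype.val) :
    ∃ f : γ → γ, IsSubsumption G (discrete eo h1 h2 h3 lab U V) f :=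
  glue_subsumed_by_discrete_general eo h1 h2 h3 lab U V G hG
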